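/- arXiv:1705.07382 — 3 statements merged into one kernel-verified Lean document; each statement's English description precedes it below -/
import Mathlib

section
/- Let Σ and G be real symmetric positive definite m×m matrices, and suppose ‖G⁻¹ Σ⁻¹‖ ≤ 1, where ‖·‖ denotes the operator norm with respect to the Euclidean norm. Then Λ_min(G^{−1/2} Σ⁻¹ G^{−1/2}) ≤ 1. Moreover, for the choice G* := Σ⁻¹ one has ‖(G*)⁻¹ Σ⁻¹‖ = 1 and Λ_min((G*)^{−1/2} Σ⁻¹ (G*)^{−1/2}) = 1; hence G* = Σ⁻¹ maximizes Λ_min(G^{−1/2} Σ⁻¹ G^{−1/2}) over all symmetric positive definite G with ‖G⁻¹ Σ⁻¹‖ ≤ 1. -/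
open Matrix
open scoped Classical

/-- The smallest eigenvalue of a real symmetric matrix (junk value `0` otherwise). -/
noncomputable def lambdaMin {m : ℕ} (M : Matrix (Fin m) (Fin m) ℝ) : ℝ :=
  if h : M.IsHermitian then ⨅ i, h.eigenvalues i else 0

/-- The inverse of the (unique symmetric positive semidefinite) square root of a matrix
(junk value `0` if the matrix is not positive semidefinite). -/
noncomputable def invSqrt {m : ℕ} (M : Matrix (Fin m) (Fin m) ℝ) :
    Matrix (Fin m) (Fin m) ℝ :=
  if h : M.PosSemidef then
    ((h.1.eigenvectorUnitary : Matrix (Fin m) (Fin m) ℝ) *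
      diagonal ((↑) ∘ Real.sqrt ∘ h.1.eigenvalues) *
      (star h.1.eigenvectorUnitary : Matrix (Fin m) (Fin m) ℝ))⁻¹ else 0

/-- The operator norm of a matrix with respect to the Euclidean norm on `ℝ^m`. -/
noncomputable def euclideanOpNorm {m : ℕ} (M : Matrix (Fin m) (Fin m) ℝ) : ℝ :=
  ‖LinearMap.toContinuousLinearMap (Matrix.toEuclideanLin M)‖

/-!
With `B = √G`, the matrix `G^{-1/2} Σ⁻¹ G^{-1/2} = B⁻¹ Σ⁻¹ B⁻¹` is conjugate by `B` to
`B⁻¹ B⁻¹ Σ⁻¹ = G⁻¹ Σ⁻¹`. So its smallest eigenvalue lies in the spectrum of `G⁻¹ Σ⁻¹`, and every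
spectral value is bounded in absolute value by the operator norm `‖G⁻¹ Σ⁻¹‖ ≤ 1`.
For `G = Σ⁻¹` both `G⁻¹ Σ⁻¹` and `G^{-1/2} Σ⁻¹ G^{-1/2}` are the identity.
-/

open scoped Matrix.Norms.L2Operator MatrixOrder

section

variable {m : ℕ}

lemma euclideanOpNorm_eq_norm (M : Matrix (Fin m) (Fin m) ℝ) : euclideanOpNorm M = ‖M‖ := rfl

lemma abs_le_euclideanOpNorm_of_mem_spectrum [NeZero m] {M : Matrix (Fin m) (Fin m) ℝ} {μ : ℝ}
    (hμ : μ ∈ spectrum ℝ M) : |μ| ≤ euclideanOpNorm M := by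
  rw [euclideanOpNorm_eq_norm]
  exact spectrum.norm_le_norm_of_mem hμ

lemma euclideanOpNorm_one [NeZero m] : euclideanOpNorm (1 : Matrix (Fin m) (Fin m) ℝ) = 1 := by
  rw [euclideanOpNorm_eq_norm, norm_one]

lemma lambdaMin_mem_spectrum [NeZero m] {M : Matrix (Fin m) (Fin m) ℝ} (hM : M.IsHermitian) :
    lambdaMin M ∈ spectrum ℝ M := by
  obtain ⟨i, hi⟩ := exists_eq_ciInf_of_finite (f := hM.eigenvalues)
  rw [lambdaMin, dif_pos hM, ← hi]
  exact hM.eigenvalues_mem_spectrum_real i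

lemma lambdaMin_one [NeZero m] : lambdaMin (1 : Matrix (Fin m) (Fin m) ℝ) = 1 := by
  simpa [spectrum.one_eq] using lambdaMin_mem_spectrum (isHermitian_one (n := Fin m))

-- The formula defining `invSqrt` is the inverse of `IsHermitian.cfc Real.sqrt`, i.e. of `√M`.
lemma invSqrt_eq_inv_sqrt {M : Matrix (Fin m) (Fin m) ℝ} (hM : M.PosSemidef) :
    invSqrt M = (CFC.sqrt M)⁻¹ := by
  rw [invSqrt, dif_pos hM, CFC.sqrt_eq_real_sqrt M hM.nonneg, cfcₙ_eq_cfc, hM.1.cfc_eq]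
  rfl

lemma isHermitian_invSqrt {M : Matrix (Fin m) (Fin m) ℝ} (hM : M.PosSemidef) :
    (invSqrt M).IsHermitian := by
  rw [invSqrt_eq_inv_sqrt hM]
  exact (CFC.sqrt_nonneg M).posSemidef.isHermitian.inv

lemma Matrix.PosDef.isUnit_sqrt {n : Type*} [Fintype n] [DecidableEq n]
    {M : Matrix n n ℝ} (hM : M.PosDef) : IsUnit (CFC.sqrt M) :=
  (CFC.isUnit_sqrt_iff M hM.posSemidef.nonneg).2 hM.isUnit

lemma spectrum_invSqrt_mul_mul_invSqrt {G : Matrix (Fin m) (Fin m) ℝ} (hG : G.PosDef)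
    (X : Matrix (Fin m) (Fin m) ℝ) :
    spectrum ℝ (invSqrt G * X * invSqrt G) = spectrum ℝ (G⁻¹ * X) := by
  obtain ⟨B, hB⟩ := hG.isUnit_sqrt
  have hBB : (B : Matrix (Fin m) (Fin m) ℝ) * B = G :=
    hB ▸ CFC.sqrt_mul_sqrt_self G hG.posSemidef.nonneg
  rw [invSqrt_eq_inv_sqrt hG.posSemidef, ← hB, ← hBB, Matrix.mul_inv_rev, ← Matrix.coe_units_inv]
  calc spectrum ℝ (↑B⁻¹ * X * ↑B⁻¹)
      = spectrum ℝ (↑B⁻¹ * (↑B⁻¹ * X * ↑B⁻¹) * ↑B) := spectrum.units_conjugate'.symm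
    _ = spectrum ℝ (↑B⁻¹ * ↑B⁻¹ * X) := by simp [Matrix.mul_assoc]

lemma invSqrt_mul_self_mul_invSqrt {M : Matrix (Fin m) (Fin m) ℝ} (hM : M.PosDef) :
    invSqrt M * M * invSqrt M = 1 := by
  obtain ⟨B, hB⟩ := hM.isUnit_sqrt
  have hBB : (B : Matrix (Fin m) (Fin m) ℝ) * B = M :=
    hB ▸ CFC.sqrt_mul_sqrt_self M hM.posSemidef.nonneg
  rw [invSqrt_eq_inv_sqrt hM.posSemidef, ← hB, ← hBB, ← Matrix.coe_units_inv]
  simp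

end

/-- For positive definite `Σ` and `G` with `‖G⁻¹Σ⁻¹‖ ≤ 1`, one has
`Λ_min(G^{−1/2} Σ⁻¹ G^{−1/2}) ≤ 1`; moreover `G* = Σ⁻¹` satisfies the constraint with
equality and attains the value `1`, hence is optimal. -/
theorem fisher_metric_optimal {m : ℕ} (hm : 0 < m)
    (S G : Matrix (Fin m) (Fin m) ℝ) (hS : S.PosDef) (hG : G.PosDef)
    (hconstraint : euclideanOpNorm (G⁻¹ * S⁻¹) ≤ 1) :
    lambdaMin (invSqrt G * S⁻¹ * invSqrt G) ≤ 1 ∧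
      euclideanOpNorm ((S⁻¹)⁻¹ * S⁻¹) = 1 ∧
      lambdaMin (invSqrt (S⁻¹) * S⁻¹ * invSqrt (S⁻¹)) = 1 := by
  have : NeZero m := ⟨hm.ne'⟩
  have hA : (invSqrt G * S⁻¹ * invSqrt G).IsHermitian := by
    have h := isHermitian_mul_mul_conjTranspose (invSqrt G) hS.inv.isHermitian
    rwa [(isHermitian_invSqrt hG.posSemidef).eq] at h
  have hmem := lambdaMin_mem_spectrum hA
  rw [spectrum_invSqrt_mul_mul_invSqrt hG] at hmem
  refine ⟨?_, ?_, ?_⟩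
  · calc lambdaMin (invSqrt G * S⁻¹ * invSqrt G)
        ≤ |lambdaMin (invSqrt G * S⁻¹ * invSqrt G)| := le_abs_self _
      _ ≤ euclideanOpNorm (G⁻¹ * S⁻¹) := abs_le_euclideanOpNorm_of_mem_spectrum hmem
      _ ≤ 1 := hconstraint
  · have hdet : IsUnit S.det := S.isUnit_iff_isUnit_det.1 hS.isUnit
    rw [S.nonsing_inv_nonsing_inv hdet, S.mul_nonsing_inv hdet, euclideanOpNorm_one]
  · rw [invSqrt_mul_self_mul_invSqrt hS.inv, lambdaMin_one]
end

section
/- Let V, V_c : ℝ^m → ℝ be measurable functions with exp(−V) and exp(−V_c) integrable with respect to Lebesgue measure, and suppose there is M ≥ 0 with 0 ≤ V(x) − V_c(x) ≤ M for all x ∈ ℝ^m. Let μ and μ_c be the probability measures with Lebesgue densities proportional to exp(−V) and exp(−V_c) respectively. If μ_c satisfies a Poincaré inequality with constant λ_c > 0, i.e. ∫ |f − ∫ f dμ_c|² dμ_c ≤ λ_c⁻¹ ∫ ‖∇f‖² dμ_c for every differentiable f ∈ L²(μ_c), then μ satisfies a Poincaré inequality with constant exp(−M) λ_c: for every differentiable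 f belonging to L²(μ) and L²(μ_c) with ∫ ‖∇f‖² dμ_c < ∞, ∫ |f − ∫ f dμ|² dμ ≤ exp(M) λ_c⁻¹ ∫ ‖∇f‖² dμ. -/
/-!
The densities satisfy `(Z_c / Z) e^{-M} ≤ dμ / dμ_c ≤ Z_c / Z`, where `Z`, `Z_c` are the
normalizing constants. Since the variance is the least mean square deviation from a constant,
`Var_μ f ≤ ∫ (f - E_{μ_c} f)² dμ ≤ (Z_c / Z) Var_{μ_c} f`, while the Dirichlet energies compare
the other way round, `∫ ‖∇f‖² dμ_c ≤ e^M (Z / Z_c) ∫ ‖∇f‖² dμ`; the normalizing constants cancel.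
-/

open MeasureTheory ProbabilityTheory

section Comparison

variable {α : Type*} [MeasurableSpace α] {μ ν : Measure α}

theorem integral_sub_integral_sq_le [IsProbabilityMeasure μ] {f : α → ℝ}
    (hf : AEStronglyMeasurable f μ) (a : ℝ) :
    ∫ x, (f x - ∫ y, f y ∂μ) ^ 2 ∂μ ≤ ∫ x, (f x - a) ^ 2 ∂μ := by
  rw [← variance_eq_integral hf.aemeasurable, ← variance_sub_const hf a]
  exact variance_le_expectation_sq (by fun_prop)

theorem integral_le_mul_integral_of_le_smul {c : ℝ} (hc : 0 ≤ c)
    (hμν : μ ≤ ENNReal.ofReal c • ν) {g : α → ℝ} (hg : 0 ≤ᵐ[ν] g) (hgi : Integrable g ν) :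
    ∫ x, g x ∂μ ≤ c * ∫ x, g x ∂ν := by
  have h := integral_mono_measure hμν (Measure.ae_smul_measure hg _)
    (hgi.smul_measure ENNReal.ofReal_ne_top)
  rwa [integral_smul_measure, ENNReal.toReal_ofReal hc, smul_eq_mul] at h

theorem integral_sub_integral_sq_le_mul_of_le_smul [IsProbabilityMeasure μ] [IsFiniteMeasure ν]
    {c : ℝ} (hc : 0 ≤ c) (hμν : μ ≤ ENNReal.ofReal c • ν) {f : α → ℝ}
    (hfμ : AEStronglyMeasurable f μ) (hfν : MemLp f 2 ν) :
    ∫ x, (f x - ∫ y, f y ∂μ) ^ 2 ∂μ ≤ c * ∫ x, (f x - ∫ y, f y ∂ν) ^ 2 ∂ν :=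
  (integral_sub_integral_sq_le hfμ _).trans <|
    integral_le_mul_integral_of_le_smul hc hμν (.of_forall fun _ => sq_nonneg _)
      (hfν.sub (memLp_const _)).integrable_sq

end Comparison

section Gibbs

variable {α : Type*} [MeasurableSpace α] (ν : Measure α)

noncomputable def partitionFunction (V : α → ℝ) : ℝ :=
  ∫ x, Real.exp (-V x) ∂ν

noncomputable def gibbsMeasure (V : α → ℝ) : Measure α :=
  ν.withDensity fun x => ENNReal.ofReal (Real.exp (-V x) / partitionFunction ν V)

variable {ν}

theorem partitionFunction_nonneg (V : α → ℝ) : 0 ≤ partitionFunction ν V :=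
  integral_nonneg fun _ => (Real.exp_pos _).le

theorem partitionFunction_pos [NeZero ν] {V : α → ℝ}
    (hV : Integrable (fun x => Real.exp (-V x)) ν) : 0 < partitionFunction ν V :=
  integral_exp_pos hV

theorem isProbabilityMeasure_gibbsMeasure [NeZero ν] {V : α → ℝ}
    (hV : Integrable (fun x => Real.exp (-V x)) ν) : IsProbabilityMeasure (gibbsMeasure ν V) := by
  constructor
  rw [gibbsMeasure, withDensity_apply _ MeasurableSet.univ, setLIntegral_univ,
    ← ofReal_integral_eq_lintegral_ofReal (hV.div_const (partitionFunction ν V))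
      (.of_forall fun x => div_nonneg (Real.exp_pos _).le (partitionFunction_pos hV).le),
    integral_div, ← partitionFunction, div_self (partitionFunction_pos hV).ne',
    ENNReal.ofReal_one]

theorem gibbsMeasure_le_smul {V W : α → ℝ} {M : ℝ} (hVW : ∀ x, W x ≤ V x + M)
    (hW : partitionFunction ν W ≠ 0) :
    gibbsMeasure ν V ≤ ENNReal.ofReal
      (Real.exp M * partitionFunction ν W / partitionFunction ν V) • gibbsMeasure ν W := by
  have hZV := partitionFunction_nonneg (ν := ν) V
  have hZW := partitionFunction_nonneg (ν := ν) W
  rw [gibbsMeasure, gibbsMeasure, ← withDensity_smul' _ _ ENNReal.ofReal_ne_top]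
  refine withDensity_mono (.of_forall fun x => ?_)
  simp only [Pi.smul_apply, smul_eq_mul]
  rw [← ENNReal.ofReal_mul (by positivity)]
  refine ENNReal.ofReal_le_ofReal ?_
  calc Real.exp (-V x) / partitionFunction ν V
      ≤ Real.exp (M + -W x) / partitionFunction ν V := by
        gcongr
        linarith [hVW x]
    _ = _ := by
        rw [Real.exp_add]
        field_simp

end Gibbs

theorem holley_stroock_poincare_general {m : ℕ}
    (V Vc : EuclideanSpace ℝ (Fin m) → ℝ)
    (hVint : Integrable (fun x => Real.exp (-V x)) volume)
    (hVcint : Integrable (fun x => Real.exp (-Vc x)) volume)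
    (M : ℝ)
    (hbound : ∀ x, 0 ≤ V x - Vc x ∧ V x - Vc x ≤ M)
    (μ μc : Measure (EuclideanSpace ℝ (Fin m)))
    (hμ : μ = volume.withDensity fun x =>
      ENNReal.ofReal (Real.exp (-V x) / ∫ y, Real.exp (-V y)))
    (hμc : μc = volume.withDensity fun x =>
      ENNReal.ofReal (Real.exp (-Vc x) / ∫ y, Real.exp (-Vc y)))
    (lamc : ℝ) (hlamc : 0 < lamc)
    (hPoincare : ∀ f : EuclideanSpace ℝ (Fin m) → ℝ, Differentiable ℝ f →
      MemLp f 2 μc → Integrable (fun x => ‖gradient f x‖ ^ 2) μc →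
      (∫ x, (f x - ∫ y, f y ∂μc) ^ 2 ∂μc) ≤ lamc⁻¹ * ∫ x, ‖gradient f x‖ ^ 2 ∂μc)
    (f : EuclideanSpace ℝ (Fin m) → ℝ) (hf : Differentiable ℝ f)
    (hfμc : MemLp f 2 μc)
    (hgrad : Integrable (fun x => ‖gradient f x‖ ^ 2) μc) :
    (∫ x, (f x - ∫ y, f y ∂μ) ^ 2 ∂μ)
      ≤ Real.exp M * lamc⁻¹ * ∫ x, ‖gradient f x‖ ^ 2 ∂μ := by
  replace hμ : μ = gibbsMeasure volume V := hμ
  replace hμc : μc = gibbsMeasure volume Vc := hμc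
  have : IsProbabilityMeasure μ := hμ ▸ isProbabilityMeasure_gibbsMeasure hVint
  have : IsProbabilityMeasure μc := hμc ▸ isProbabilityMeasure_gibbsMeasure hVcint
  set Z := partitionFunction volume V
  set Zc := partitionFunction volume Vc
  have hZ : 0 < Z := partitionFunction_pos hVint
  have hZc : 0 < Zc := partitionFunction_pos hVcint
  have hμ_le : μ ≤ ENNReal.ofReal (Real.exp 0 * Zc / Z) • μc :=
    hμ ▸ hμc ▸ gibbsMeasure_le_smul (fun x => by linarith [hbound x]) hZc.ne'
  have hμc_le : μc ≤ ENNReal.ofReal (Real.exp M * Z / Zc) • μ :=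
    hμ ▸ hμc ▸ gibbsMeasure_le_smul (fun x => by linarith [hbound x]) hZ.ne'
  have hgradμ := (hgrad.smul_measure ENNReal.ofReal_ne_top).mono_measure hμ_le
  calc ∫ x, (f x - ∫ y, f y ∂μ) ^ 2 ∂μ
      ≤ Real.exp 0 * Zc / Z * ∫ x, (f x - ∫ y, f y ∂μc) ^ 2 ∂μc :=
        integral_sub_integral_sq_le_mul_of_le_smul (by positivity) hμ_le
          hf.continuous.aestronglyMeasurable hfμc
    _ ≤ Real.exp 0 * Zc / Z * (lamc⁻¹ * ∫ x, ‖gradient f x‖ ^ 2 ∂μc) := by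
        grw [hPoincare f hf hfμc hgrad]
    _ ≤ Real.exp 0 * Zc / Z * (lamc⁻¹ * (Real.exp M * Z / Zc * ∫ x, ‖gradient f x‖ ^ 2 ∂μ)) := by
        grw [integral_le_mul_integral_of_le_smul (by positivity) hμc_le
          (.of_forall fun x => by positivity) hgradμ]
    _ = Real.exp M * lamc⁻¹ * ∫ x, ‖gradient f x‖ ^ 2 ∂μ := by
        rw [Real.exp_zero]
        field_simp

/-- Holley–Stroock perturbation principle: if `μ ∝ exp(−V) dx` and `μ_c ∝ exp(−V_c) dx`
with `0 ≤ V − V_c ≤ M`, and `μ_c` satisfies a Poincaré inequality with constant `λ_c > 0`,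
then `μ` satisfies a Poincaré inequality with constant `exp(−M) λ_c`. -/
theorem holley_stroock_poincare {m : ℕ}
    (V Vc : EuclideanSpace ℝ (Fin m) → ℝ)
    (hVmeas : Measurable V) (hVcmeas : Measurable Vc)
    (hVint : Integrable (fun x => Real.exp (-V x)) volume)
    (hVcint : Integrable (fun x => Real.exp (-Vc x)) volume)
    (M : ℝ) (hM : 0 ≤ M)
    (hbound : ∀ x, 0 ≤ V x - Vc x ∧ V x - Vc x ≤ M)
    (μ μc : Measure (EuclideanSpace ℝ (Fin m)))
    (hμ : μ = volume.withDensity fun x =>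
      ENNReal.ofReal (Real.exp (-V x) / ∫ y, Real.exp (-V y)))
    (hμc : μc = volume.withDensity fun x =>
      ENNReal.ofReal (Real.exp (-Vc x) / ∫ y, Real.exp (-Vc y)))
    (lamc : ℝ) (hlamc : 0 < lamc)
    (hPoincare : ∀ f : EuclideanSpace ℝ (Fin m) → ℝ, Differentiable ℝ f →
      MemLp f 2 μc → Integrable (fun x => ‖gradient f x‖ ^ 2) μc →
      (∫ x, (f x - ∫ y, f y ∂μc) ^ 2 ∂μc) ≤ lamc⁻¹ * ∫ x, ‖gradient f x‖ ^ 2 ∂μc)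
    (f : EuclideanSpace ℝ (Fin m) → ℝ) (hf : Differentiable ℝ f)
    (hfμ : MemLp f 2 μ) (hfμc : MemLp f 2 μc)
    (hgrad : Integrable (fun x => ‖gradient f x‖ ^ 2) μc) :
    (∫ x, (f x - ∫ y, f y ∂μ) ^ 2 ∂μ)
      ≤ Real.exp M * lamc⁻¹ * ∫ x, ‖gradient f x‖ ^ 2 ∂μ :=
  holley_stroock_poincare_general V Vc hVint hVcint M hbound μ μc hμ hμc lamc hlamc hPoincare f hf
    hfμc hgrad
end

section
/- Let n ∈ ℕ, let W be a real symmetric n×n matrix with nonnegative entries, let D be the diagonal matrix with D_{ii} = Σ_j W_{ij}, and let L := D − W be the graph Laplacian. Let U := {u ∈ ℝ^n : Σ_i u_i = 0}, let α ∈ ℕ with α ≥ 1, and let Λ₂ := min{⟨L u, u⟩ : u ∈ U, ‖u‖ = 1}. Let γ > 0, H(w) := ∫_{−∞}^{w} exp(−t²/(2γ²)) dt, 𝒵 ⊂ {1, …, n}, y_j ∈ {−1,1} for j ∈ 𝒵, and define the probit objective G(u) := (1/2)⟨L^α u, u⟩ − Σ_{j ∈ 𝒵} log H(y_j u_j) for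 u ∈ U. Then G is Λ₂^α-strongly convex on U: for all u₀, u₁ ∈ U and t ∈ [0,1], G((1−t)u₀ + t u₁) ≤ (1−t)G(u₀) + t G(u₁) − (Λ₂^α/2) t(1−t) ‖u₀ − u₁‖². -/
/-!
With `q(u) = ⟨L^α u, u⟩`, the identity
`q((1-t)u₀ + t u₁) = (1-t) q(u₀) + t q(u₁) - t(1-t) q(u₀ - u₁)` reduces strong convexity of the
quadratic part to `q(d) ≥ Λ₂^α ‖d‖²` on the mean-zero subspace `U`. Since `L` is symmetric and
maps `U` into `U`, this follows by induction on `α` in steps of two from `L^(k+2) = L L^k L`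
and `‖L u‖² ≥ Λ₂² ‖u‖²`, which comes from expanding `‖L u - Λ₂ u‖² ≥ 0`.

The likelihood part is convex because `H` is log-concave: with `φ(t) = exp(-t²/(2γ²))`,
`(log H)'' ≤ 0` amounts to `-(w/γ²) H(w) ≤ φ(w)`, which is obtained by integrating
`-(w/γ²) φ(t) ≤ -(t/γ²) φ(t) = φ'(t)` over `t < w`.
-/

open Matrix MeasureTheory Real Set Filter Topology

section QuadraticForm

variable {R ι : Type*} [Fintype ι] [CommRing R]

variable (R ι) in
def sumZero : Submodule R (ι → R) where
  carrier := {u | ∑ i, u i = 0}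
  add_mem' hu hv := by simp_all [Finset.sum_add_distrib]
  zero_mem' := by simp
  smul_mem' c u hu := by simp_all [← Finset.mul_sum]

theorem mem_sumZero {u : ι → R} : u ∈ sumZero R ι ↔ ∑ i, u i = 0 := Iff.rfl

theorem mulVec_dotProduct_convex_combination (A : Matrix ι ι R) (u₀ u₁ : ι → R) (t : R) :
    (A *ᵥ ((1 - t) • u₀ + t • u₁)) ⬝ᵥ ((1 - t) • u₀ + t • u₁)
      = (1 - t) * ((A *ᵥ u₀) ⬝ᵥ u₀) + t * ((A *ᵥ u₁) ⬝ᵥ u₁)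
        - t * (1 - t) * ((A *ᵥ (u₀ - u₁)) ⬝ᵥ (u₀ - u₁)) := by
  simp only [mulVec_add, mulVec_sub, mulVec_smul, add_dotProduct, sub_dotProduct,
    dotProduct_add, dotProduct_sub, smul_dotProduct, dotProduct_smul, smul_eq_mul]
  ring

theorem Matrix.IsSymm.sum_sum_mul_swap {W : Matrix ι ι R} (hW : W.IsSymm) (f : ι → ι → R) :
    ∑ i, ∑ j, W i j * f i j = ∑ i, ∑ j, W i j * f j i := by
  rw [Finset.sum_comm]
  exact Finset.sum_congr rfl fun i _ => Finset.sum_congr rfl fun j _ => by rw [hW.apply]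

theorem Matrix.IsSymm.mul_mul_mulVec_dotProduct {A : Matrix ι ι R} (hA : A.IsSymm)
    (B : Matrix ι ι R) (u : ι → R) :
    ((A * B * A) *ᵥ u) ⬝ᵥ u = (B *ᵥ (A *ᵥ u)) ⬝ᵥ (A *ᵥ u) := by
  rw [← mulVec_mulVec, ← mulVec_mulVec, dotProduct_mulVec, ← mulVec_transpose, hA.eq,
    dotProduct_comm]

variable [LinearOrder R] [IsStrictOrderedRing R]

theorem sq_mul_dotProduct_le_mulVec_dotProduct_mulVec {A : Matrix ι ι R} {Λ : R} {u : ι → R}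
    (hΛ : 0 ≤ Λ) (hu : Λ * (u ⬝ᵥ u) ≤ (A *ᵥ u) ⬝ᵥ u) :
    Λ ^ 2 * (u ⬝ᵥ u) ≤ (A *ᵥ u) ⬝ᵥ (A *ᵥ u) := by
  have hsq : 0 ≤ (A *ᵥ u - Λ • u) ⬝ᵥ (A *ᵥ u - Λ • u) :=
    Fintype.sum_nonneg fun i => mul_self_nonneg _
  simp only [sub_dotProduct, dotProduct_sub, smul_dotProduct, dotProduct_smul, smul_eq_mul,
    dotProduct_comm u (A *ᵥ u)] at hsq
  nlinarith

theorem pow_mul_dotProduct_le_pow_mulVec_dotProduct [DecidableEq ι] {A : Matrix ι ι R}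
    (hA : A.IsSymm) {U : Submodule R (ι → R)} (hAU : ∀ u ∈ U, A *ᵥ u ∈ U) {Λ : R}
    (hΛ : 0 ≤ Λ) (hΛU : ∀ u ∈ U, Λ * (u ⬝ᵥ u) ≤ (A *ᵥ u) ⬝ᵥ u) (k : ℕ) :
    ∀ u ∈ U, Λ ^ k * (u ⬝ᵥ u) ≤ (A ^ k *ᵥ u) ⬝ᵥ u := by
  induction k using Nat.twoStepInduction with
  | zero => simp
  | one => simpa using hΛU
  | more k ih _ =>
    intro u hu
    calc Λ ^ (k + 2) * (u ⬝ᵥ u) = Λ ^ k * (Λ ^ 2 * (u ⬝ᵥ u)) := by ring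
      _ ≤ Λ ^ k * ((A *ᵥ u) ⬝ᵥ (A *ᵥ u)) := by
        gcongr
        exact sq_mul_dotProduct_le_mulVec_dotProduct_mulVec hΛ (hΛU u hu)
      _ ≤ (A ^ k *ᵥ (A *ᵥ u)) ⬝ᵥ (A *ᵥ u) := ih _ (hAU u hu)
      _ = (A ^ (k + 2) *ᵥ u) ⬝ᵥ u := by
        rw [pow_succ, pow_succ', hA.mul_mul_mulVec_dotProduct]

end QuadraticForm

section Laplacian

variable {R ι : Type*} [Fintype ι] [DecidableEq ι] [CommRing R]

def weightedLaplacian (W : Matrix ι ι R) : Matrix ι ι R :=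
  diagonal (fun i => ∑ j, W i j) - W

variable {W : Matrix ι ι R}

theorem weightedLaplacian_isSymm (hW : W.IsSymm) : (weightedLaplacian W).IsSymm := by
  rw [weightedLaplacian, IsSymm, transpose_sub, diagonal_transpose, hW.eq]

theorem weightedLaplacian_mulVec_apply (x : ι → R) (i : ι) :
    (weightedLaplacian W *ᵥ x) i = ∑ j, W i j * (x i - x j) := by
  rw [weightedLaplacian, sub_mulVec, Pi.sub_apply, mulVec_diagonal]
  simp [mulVec, dotProduct, mul_sub, Finset.sum_mul]

theorem weightedLaplacian_mulVec_mem_sumZero (hW : W.IsSymm) (u : ι → R) :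
    weightedLaplacian W *ᵥ u ∈ sumZero R ι := by
  simp_rw [mem_sumZero, weightedLaplacian_mulVec_apply, mul_sub, Finset.sum_sub_distrib,
    hW.sum_sum_mul_swap fun i _ => u i, sub_self]

theorem two_mul_weightedLaplacian_mulVec_dotProduct (hW : W.IsSymm) (x : ι → R) :
    2 * ((weightedLaplacian W *ᵥ x) ⬝ᵥ x) = ∑ i, ∑ j, W i j * (x i - x j) ^ 2 := by
  have hQ : (weightedLaplacian W *ᵥ x) ⬝ᵥ x = ∑ i, ∑ j, W i j * (x i - x j) * x i := by
    simp [dotProduct, weightedLaplacian_mulVec_apply, Finset.sum_mul]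
  have hQ' : (weightedLaplacian W *ᵥ x) ⬝ᵥ x = ∑ i, ∑ j, W i j * (x j - x i) * x j := by
    simp_rw [hQ, mul_assoc]
    exact hW.sum_sum_mul_swap fun i j => (x i - x j) * x i
  rw [two_mul]
  nth_rw 1 [hQ]
  rw [hQ']
  simp_rw [← Finset.sum_add_distrib]
  ring_nf

theorem weightedLaplacian_mulVec_dotProduct_nonneg [LinearOrder R] [IsStrictOrderedRing R]
    (hW : W.IsSymm) (hW₀ : ∀ i j, 0 ≤ W i j) (x : ι → R) :
    0 ≤ (weightedLaplacian W *ᵥ x) ⬝ᵥ x := by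
  have hsum : 0 ≤ ∑ i, ∑ j, W i j * (x i - x j) ^ 2 :=
    Fintype.sum_nonneg fun i => Fintype.sum_nonneg fun j => mul_nonneg (hW₀ i j) (sq_nonneg _)
  linarith [two_mul_weightedLaplacian_mulVec_dotProduct hW x]

end Laplacian

section SpectralGap

variable {ι : Type*} [Fintype ι]

noncomputable def spectralGap (A : Matrix ι ι ℝ) : ℝ :=
  sInf {r : ℝ | ∃ u : ι → ℝ, (∑ i, u i) = 0 ∧ (∑ i, u i ^ 2) = 1 ∧ r = (A *ᵥ u) ⬝ᵥ u}

variable {A : Matrix ι ι ℝ}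

theorem spectralGap_nonneg (hA : ∀ x, 0 ≤ (A *ᵥ x) ⬝ᵥ x) : 0 ≤ spectralGap A :=
  Real.sInf_nonneg fun _ ⟨u, _, _, hr⟩ => hr ▸ hA u

theorem spectralGap_mul_dotProduct_le (hA : ∀ x, 0 ≤ (A *ᵥ x) ⬝ᵥ x) {v : ι → ℝ}
    (hv : ∑ i, v i = 0) : spectralGap A * (v ⬝ᵥ v) ≤ (A *ᵥ v) ⬝ᵥ v := by
  rcases eq_or_ne v 0 with rfl | hv0
  · simp
  have hm : 0 < v ⬝ᵥ v :=
    (Fintype.sum_nonneg fun i => mul_self_nonneg (v i)).lt_of_ne'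
      (dotProduct_self_eq_zero.not.2 hv0)
  have hsq : ∑ i, v i ^ 2 = v ⬝ᵥ v := by simp [dotProduct, sq]
  set s := √(v ⬝ᵥ v)
  have hs : s ^ 2 = v ⬝ᵥ v := Real.sq_sqrt hm.le
  calc spectralGap A * (v ⬝ᵥ v) ≤ (A *ᵥ v) ⬝ᵥ v / (v ⬝ᵥ v) * (v ⬝ᵥ v) := by
        gcongr
        refine csInf_le ⟨0, fun _ ⟨u, _, _, hr⟩ => hr ▸ hA u⟩ ⟨s⁻¹ • v, ?_, ?_, ?_⟩
        · simp [← Finset.mul_sum, hv]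
        · simp_rw [Pi.smul_apply, smul_eq_mul, mul_pow, ← Finset.mul_sum, hsq, inv_pow, hs,
            inv_mul_cancel₀ hm.ne']
        · rw [mulVec_smul, smul_dotProduct, dotProduct_smul, smul_eq_mul, smul_eq_mul, ← hs]
          field_simp
    _ = (A *ᵥ v) ⬝ᵥ v := div_mul_cancel₀ _ hm.ne'

end SpectralGap

theorem spectralGap_weightedLaplacian_pow_mul_le {ι : Type*} [Fintype ι] [DecidableEq ι]
    {W : Matrix ι ι ℝ} (hW : W.IsSymm) (hW₀ : ∀ i j, 0 ≤ W i j) (α : ℕ) {u : ι → ℝ}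
    (hu : u ∈ sumZero ℝ ι) :
    spectralGap (weightedLaplacian W) ^ α * (u ⬝ᵥ u) ≤ (weightedLaplacian W ^ α *ᵥ u) ⬝ᵥ u := by
  have hpsd := weightedLaplacian_mulVec_dotProduct_nonneg hW hW₀
  exact pow_mul_dotProduct_le_pow_mulVec_dotProduct (weightedLaplacian_isSymm hW)
    (fun v _ => weightedLaplacian_mulVec_mem_sumZero hW v) (spectralGap_nonneg hpsd)
    (fun v hv => spectralGap_mul_dotProduct_le hpsd hv) α u hu

theorem hasDerivAt_integral_Iio {f : ℝ → ℝ} (hf : Integrable f) {x : ℝ} (hx : ContinuousAt f x) :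
    HasDerivAt (fun w => ∫ t in Iio w, f t) (f x) x := by
  have hsplit : ∀ w, ∫ t in Iio w, f t = (∫ t in Iic x, f t) + ∫ t in x..w, f t := fun w => by
    rw [← integral_Iic_eq_integral_Iio,
      ← intervalIntegral.integral_Iic_sub_Iic hf.integrableOn hf.integrableOn, add_sub_cancel]
  simp_rw [hsplit]
  exact (intervalIntegral.integral_hasDerivAt_right hf.intervalIntegrable
    hf.aestronglyMeasurable.stronglyMeasurableAtFilter hx).const_add _

theorem convexOn_univ_neg_log_of_hasDerivAt {F f f' : ℝ → ℝ} (hF : ∀ x, 0 < F x)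
    (hFf : ∀ x, HasDerivAt F (f x) x) (hff' : ∀ x, HasDerivAt f (f' x) x)
    (hlogconc : ∀ x, f' x * F x ≤ f x ^ 2) : ConvexOn ℝ univ (fun x => -log (F x)) := by
  have hg : ∀ x, HasDerivAt (fun x => -log (F x)) (-(f x / F x)) x := fun x =>
    ((hFf x).log (hF x).ne').neg
  have hg' : ∀ x, HasDerivAt (fun x => -(f x / F x))
      (-((f' x * F x - f x * f x) / F x ^ 2)) x := fun x =>
    ((hff' x).div (hFf x) (hF x).ne').neg
  refine convexOn_of_hasDerivWithinAt2_nonneg convex_univ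
    (continuous_iff_continuousAt.2 fun x => (hg x).continuousAt).continuousOn
    (fun x _ => (hg x).hasDerivWithinAt) (fun x _ => (hg' x).hasDerivWithinAt) fun x _ => ?_
  rw [neg_nonneg]
  exact div_nonpos_of_nonpos_of_nonneg (by nlinarith [hlogconc x]) (sq_nonneg _)

section Gaussian

noncomputable def gaussianKernel (γ t : ℝ) : ℝ := exp (-t ^ 2 / (2 * γ ^ 2))

variable {γ : ℝ}

theorem gaussianKernel_pos (γ t : ℝ) : 0 < gaussianKernel γ t := exp_pos _

theorem hasDerivAt_gaussianKernel (γ t : ℝ) :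
    HasDerivAt (gaussianKernel γ) (-(t / γ ^ 2) * gaussianKernel γ t) t := by
  have h : HasDerivAt (fun t => -t ^ 2 / (2 * γ ^ 2)) (-(2 * t) / (2 * γ ^ 2)) t := by
    simpa using (hasDerivAt_pow 2 t).neg.div_const (2 * γ ^ 2)
  convert h.exp using 1
  · rfl
  · rw [gaussianKernel]; ring

theorem integrable_gaussianKernel (hγ : γ ≠ 0) : Integrable (gaussianKernel γ) := by
  refine (integrable_exp_neg_mul_sq (b := (2 * γ ^ 2)⁻¹) (by positivity)).congr
    (Eventually.of_forall fun t => ?_)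
  simp only [gaussianKernel]
  ring_nf

theorem integrable_deriv_gaussianKernel (hγ : γ ≠ 0) :
    Integrable fun t => -(t / γ ^ 2) * gaussianKernel γ t := by
  refine ((integrable_mul_exp_neg_mul_sq (b := (2 * γ ^ 2)⁻¹) (by positivity)).const_mul
    (-(γ ^ 2)⁻¹)).congr (Eventually.of_forall fun t => ?_)
  simp only [gaussianKernel]
  ring_nf

theorem tendsto_gaussianKernel_atBot (hγ : γ ≠ 0) : Tendsto (gaussianKernel γ) atBot (𝓝 0) := by
  have hsq : Tendsto (fun t : ℝ => t ^ 2) atBot atTop := by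
    simpa [sq] using tendsto_id.atBot_mul_atBot₀ tendsto_id
  exact tendsto_exp_atBot.comp
    ((tendsto_neg_atTop_atBot.comp hsq).atBot_div_const (by positivity))

theorem integral_Iio_deriv_gaussianKernel (hγ : γ ≠ 0) (w : ℝ) :
    ∫ t in Iio w, -(t / γ ^ 2) * gaussianKernel γ t = gaussianKernel γ w := by
  rw [← integral_Iic_eq_integral_Iio, integral_Iic_of_hasDerivAt_of_tendsto'
    (fun t _ => hasDerivAt_gaussianKernel γ t) (integrable_deriv_gaussianKernel hγ).integrableOn
    (tendsto_gaussianKernel_atBot hγ), sub_zero]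

theorem neg_mul_integral_Iio_gaussianKernel_le (hγ : γ ≠ 0) (w : ℝ) :
    -(w / γ ^ 2) * ∫ t in Iio w, gaussianKernel γ t ≤ gaussianKernel γ w := by
  rw [← integral_Iio_deriv_gaussianKernel hγ w, ← integral_const_mul]
  refine setIntegral_mono_on ((integrable_gaussianKernel hγ).const_mul _).integrableOn
    (integrable_deriv_gaussianKernel hγ).integrableOn measurableSet_Iio fun t ht => ?_
  have : -(w / γ ^ 2) ≤ -(t / γ ^ 2) := by gcongr; exact ht.le
  exact mul_le_mul_of_nonneg_right this (gaussianKernel_pos γ t).le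

theorem integral_Iio_gaussianKernel_pos (hγ : γ ≠ 0) (w : ℝ) :
    0 < ∫ t in Iio w, gaussianKernel γ t := by
  rw [setIntegral_pos_iff_support_of_nonneg_ae
    (Eventually.of_forall fun t => (gaussianKernel_pos γ t).le)
    (integrable_gaussianKernel hγ).integrableOn,
    Function.support_eq_univ fun t => (gaussianKernel_pos γ t).ne', univ_inter]
  simp

theorem convexOn_neg_log_integral_Iio_gaussianKernel (hγ : γ ≠ 0) :
    ConvexOn ℝ univ fun w => -log (∫ t in Iio w, gaussianKernel γ t) := by
  refine convexOn_univ_neg_log_of_hasDerivAt (integral_Iio_gaussianKernel_pos hγ)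
    (fun w => hasDerivAt_integral_Iio (integrable_gaussianKernel hγ)
      (hasDerivAt_gaussianKernel γ w).continuousAt)
    (hasDerivAt_gaussianKernel γ) fun w => ?_
  have hmills := neg_mul_integral_Iio_gaussianKernel_le hγ w
  have hpos := gaussianKernel_pos γ w
  calc -(w / γ ^ 2) * gaussianKernel γ w * ∫ t in Iio w, gaussianKernel γ t
      = gaussianKernel γ w * (-(w / γ ^ 2) * ∫ t in Iio w, gaussianKernel γ t) := by ring
    _ ≤ gaussianKernel γ w * gaussianKernel γ w := mul_le_mul_of_nonneg_left hmills hpos.le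
    _ = gaussianKernel γ w ^ 2 := (sq _).symm

end Gaussian

theorem ConvexOn.sum_comp_mul_apply {ι : Type*} {g : ℝ → ℝ} (hg : ConvexOn ℝ univ g)
    (s : Finset ι) (c : ι → ℝ) : ConvexOn ℝ univ fun u : ι → ℝ => ∑ j ∈ s, g (c j * u j) := by
  refine ⟨convex_univ, fun u _ v _ a b ha hb hab => ?_⟩
  simp only [smul_eq_mul, Finset.mul_sum, ← Finset.sum_add_distrib]
  refine Finset.sum_le_sum fun j _ => ?_
  have := hg.2 (mem_univ (c j * u j)) (mem_univ (c j * v j)) ha hb hab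
  simp only [smul_eq_mul] at this
  convert this using 2
  simp only [Pi.add_apply, Pi.smul_apply, smul_eq_mul]
  ring

theorem probit_objective_strongly_convex_general (n : ℕ)
    (W : Matrix (Fin n) (Fin n) ℝ) (hWsymm : W.IsSymm) (hWnonneg : ∀ i j, 0 ≤ W i j)
    (L : Matrix (Fin n) (Fin n) ℝ)
    (hL : L = Matrix.diagonal (fun i => ∑ j, W i j) - W)
    (α : ℕ)
    (Λ₂ : ℝ)
    (hΛ₂ : Λ₂ = sInf {r : ℝ | ∃ u : Fin n → ℝ,
      (∑ i, u i) = 0 ∧ (∑ i, u i ^ 2) = 1 ∧ r = (L *ᵥ u) ⬝ᵥ u})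
    (γ : ℝ) (hγ : 0 < γ)
    (H : ℝ → ℝ) (hH : H = fun w => ∫ t in Set.Iio w, Real.exp (-t ^ 2 / (2 * γ ^ 2)))
    (Z : Finset (Fin n)) (y : Fin n → ℝ)
    (G : (Fin n → ℝ) → ℝ)
    (hG : G = fun u => (1 / 2) * ((L ^ α *ᵥ u) ⬝ᵥ u)
      - ∑ j ∈ Z, Real.log (H (y j * u j))) :
    ∀ u₀ u₁ : Fin n → ℝ, (∑ i, u₀ i) = 0 → (∑ i, u₁ i) = 0 →
      ∀ t ∈ Set.Icc (0 : ℝ) 1,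
        G ((1 - t) • u₀ + t • u₁)
          ≤ (1 - t) * G u₀ + t * G u₁
            - Λ₂ ^ α / 2 * (t * (1 - t)) * ∑ i, (u₀ i - u₁ i) ^ 2 := by
  intro u₀ u₁ hu₀ hu₁ t ⟨ht₀, ht₁⟩
  obtain rfl : L = weightedLaplacian W := hL
  obtain rfl : Λ₂ = spectralGap (weightedLaplacian W) := hΛ₂
  obtain rfl : H = fun w => ∫ t in Iio w, gaussianKernel γ t := hH
  subst hG
  have hgap := spectralGap_weightedLaplacian_pow_mul_le hWsymm hWnonneg α
    ((sumZero ℝ (Fin n)).sub_mem hu₀ hu₁)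
  have hquad := mulVec_dotProduct_convex_combination (weightedLaplacian W ^ α) u₀ u₁ t
  have hlog := ((convexOn_neg_log_integral_Iio_gaussianKernel hγ.ne').sum_comp_mul_apply Z y).2
    (mem_univ u₀) (mem_univ u₁) (sub_nonneg.2 ht₁) ht₀ (sub_add_cancel 1 t)
  have hsq : ∑ i, (u₀ i - u₁ i) ^ 2 = (u₀ - u₁) ⬝ᵥ (u₀ - u₁) := by simp [dotProduct, sq]
  simp only [Finset.sum_neg_distrib, smul_eq_mul] at hlog
  rw [hsq]
  linarith [mul_le_mul_of_nonneg_left hgap (mul_nonneg ht₀ (sub_nonneg.2 ht₁))]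

/-- The probit objective `G(u) = ½⟨L^α u, u⟩ − Σ_{j ∈ 𝒵} log H(y_j u_j)` on the mean-zero
subspace `U` is `Λ₂^α`-strongly convex, where `Λ₂` is the smallest nontrivial eigenvalue of
the graph Laplacian `L`. -/
theorem probit_objective_strongly_convex (n : ℕ) (hn : 2 ≤ n)
    (W : Matrix (Fin n) (Fin n) ℝ) (hWsymm : W.IsSymm) (hWnonneg : ∀ i j, 0 ≤ W i j)
    (L : Matrix (Fin n) (Fin n) ℝ)
    (hL : L = Matrix.diagonal (fun i => ∑ j, W i j) - W)
    (α : ℕ) (hα : 1 ≤ α)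
    (Λ₂ : ℝ)
    (hΛ₂ : Λ₂ = sInf {r : ℝ | ∃ u : Fin n → ℝ,
      (∑ i, u i) = 0 ∧ (∑ i, u i ^ 2) = 1 ∧ r = (L *ᵥ u) ⬝ᵥ u})
    (γ : ℝ) (hγ : 0 < γ)
    (H : ℝ → ℝ) (hH : H = fun w => ∫ t in Set.Iio w, Real.exp (-t ^ 2 / (2 * γ ^ 2)))
    (Z : Finset (Fin n)) (y : Fin n → ℝ) (hy : ∀ j ∈ Z, y j = -1 ∨ y j = 1)
    (G : (Fin n → ℝ) → ℝ)
    (hG : G = fun u => (1 / 2) * ((L ^ α *ᵥ u) ⬝ᵥ u)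
      - ∑ j ∈ Z, Real.log (H (y j * u j))) :
    ∀ u₀ u₁ : Fin n → ℝ, (∑ i, u₀ i) = 0 → (∑ i, u₁ i) = 0 →
      ∀ t ∈ Set.Icc (0 : ℝ) 1,
        G ((1 - t) • u₀ + t • u₁)
          ≤ (1 - t) * G u₀ + t * G u₁
            - Λ₂ ^ α / 2 * (t * (1 - t)) * ∑ i, (u₀ i - u₁ i) ^ 2 :=
  probit_objective_strongly_convex_general n W hWsymm hWnonneg L hL α Λ₂ hΛ₂ γ hγ H hH Z y G hG
end
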